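/- Bretagnolle–Huber inequality: for probability measures P and Q on the same measurable space and any event G, P(G) + Q(Gᶜ) ≥ (1/2)·exp(−KL(P,Q)). -/

import Mathlib

/-!
With `f = dP/dQ`, the Bhattacharyya coefficient `B = ∫ √f dQ` sits between the two sides.
Rewritten as `B = ∫ exp (-½ log f) dP`, Jensen's inequality for `exp` gives `B ≥ exp (-½ KL(P,Q))`.
Cauchy–Schwarz applied to `√f = √(min f 1) · √(max f 1)` gives
`B² ≤ ∫ min f 1 dQ · ∫ max f 1 dQ`; the first factor is at most `P(G) + Q(Gᶜ)` (bound `min f 1`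
by `f` on `G` and by `1` off `G`) and the second at most `∫ (f + 1) dQ ≤ 2`.
-/

open MeasureTheory
open scoped ENNReal Classical

noncomputable def klDiv {Ω : Type*} [MeasurableSpace Ω] (P Q : Measure Ω) : ℝ≥0∞ :=
  if P ≪ Q ∧ Integrable (llr P Q) P then ENNReal.ofReal (∫ x, llr P Q x ∂P) else ⊤

open Real

lemma ENNReal.mul_ofReal_exp_neg_half_log_toReal {a : ℝ≥0∞} (ha : a ≠ ∞) :
    a * ENNReal.ofReal (exp (-Real.log a.toReal / 2)) = a ^ (1 / 2 : ℝ) := by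
  rcases eq_or_ne a 0 with rfl | ha₀
  · simp
  have ht : 0 < a.toReal := ENNReal.toReal_pos ha₀ ha
  have hexp : exp (-Real.log a.toReal / 2) = a.toReal ^ (-(1 / 2) : ℝ) := by
    rw [Real.rpow_def_of_pos ht]; ring_nf
  rw [hexp, ← ENNReal.ofReal_rpow_of_pos ht, ENNReal.ofReal_toReal ha]
  nth_rw 1 [← ENNReal.rpow_one a]
  rw [← ENNReal.rpow_add _ _ ha₀ ha]
  norm_num

lemma ofReal_exp_integral_le_lintegral {α : Type*} [MeasurableSpace α] {μ : Measure α}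
    [IsProbabilityMeasure μ] {f : α → ℝ} (hf : Integrable f μ) :
    ENNReal.ofReal (exp (∫ x, f x ∂μ)) ≤ ∫⁻ x, ENNReal.ofReal (exp (f x)) ∂μ := by
  by_cases hfin : ∫⁻ x, ENNReal.ofReal (exp (f x)) ∂μ = ∞
  · simp [hfin]
  have hexp_nonneg : 0 ≤ᵐ[μ] fun x ↦ exp (f x) := .of_forall fun x ↦ (exp_pos _).le
  have hexp_int : Integrable (fun x ↦ exp (f x)) μ :=
    ⟨continuous_exp.comp_aestronglyMeasurable hf.aestronglyMeasurable,
      (hasFiniteIntegral_iff_ofReal hexp_nonneg).2 (lt_top_iff_ne_top.2 hfin)⟩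
  rw [← ofReal_integral_eq_lintegral_ofReal hexp_int hexp_nonneg]
  exact ENNReal.ofReal_le_ofReal <| convexOn_exp.map_integral_le continuous_exp.continuousOn
    isClosed_univ (.of_forall fun _ ↦ Set.mem_univ _) hf hexp_int

lemma lintegral_rpow_half_sq_le_lintegral_min_mul_lintegral_max {α : Type*} [MeasurableSpace α]
    {μ : Measure α} {f : α → ℝ≥0∞} (hf : AEMeasurable f μ) :
    (∫⁻ x, f x ^ (1 / 2 : ℝ) ∂μ) ^ 2 ≤ (∫⁻ x, min (f x) 1 ∂μ) * ∫⁻ x, max (f x) 1 ∂μ := by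
  have hsplit : ∀ x, f x ^ (1 / 2 : ℝ) = min (f x) 1 ^ (1 / 2 : ℝ) * max (f x) 1 ^ (1 / 2 : ℝ) :=
    fun x ↦ by rw [← ENNReal.mul_rpow_of_nonneg _ _ (by norm_num), min_mul_max, mul_one]
  have hcs := ENNReal.lintegral_mul_norm_pow_le (hf.min (aemeasurable_const (b := 1)))
    (hf.max (aemeasurable_const (b := 1))) (p := 1 / 2) (q := 1 / 2) (by norm_num) (by norm_num)
    (by norm_num)
  simp_rw [← hsplit] at hcs
  calc (∫⁻ x, f x ^ (1 / 2 : ℝ) ∂μ) ^ 2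
      ≤ ((∫⁻ x, min (f x) 1 ∂μ) ^ (1 / 2 : ℝ) * (∫⁻ x, max (f x) 1 ∂μ) ^ (1 / 2 : ℝ)) ^ 2 := by
        gcongr
    _ = (∫⁻ x, min (f x) 1 ∂μ) * ∫⁻ x, max (f x) 1 ∂μ := by
        rw [mul_pow, ← ENNReal.rpow_natCast, ← ENNReal.rpow_natCast, ← ENNReal.rpow_mul,
          ← ENNReal.rpow_mul]
        norm_num

namespace MeasureTheory.Measure

variable {Ω : Type*} [MeasurableSpace Ω] {P Q : Measure Ω}

noncomputable def bhattacharyya (P Q : Measure Ω) : ℝ≥0∞ :=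
  ∫⁻ x, P.rnDeriv Q x ^ (1 / 2 : ℝ) ∂Q

lemma lintegral_min_rnDeriv_one_le {G : Set Ω} (hG : MeasurableSet G) :
    ∫⁻ x, min (P.rnDeriv Q x) 1 ∂Q ≤ P G + Q Gᶜ := by
  rw [← lintegral_add_compl _ hG]
  gcongr
  · exact (setLIntegral_mono' hG fun x _ ↦ min_le_left _ _).trans (setLIntegral_rnDeriv_le G)
  · exact (setLIntegral_mono' hG.compl fun x _ ↦ min_le_right _ _).trans (by simp)

lemma lintegral_max_rnDeriv_one_le :
    ∫⁻ x, max (P.rnDeriv Q x) 1 ∂Q ≤ P Set.univ + Q Set.univ :=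
  calc ∫⁻ x, max (P.rnDeriv Q x) 1 ∂Q ≤ ∫⁻ x, (P.rnDeriv Q x + 1) ∂Q :=
        lintegral_mono fun x ↦ max_le le_self_add le_add_self
    _ ≤ P Set.univ + Q Set.univ := by
        rw [lintegral_add_right _ measurable_const, lintegral_one]
        gcongr
        exact lintegral_rnDeriv_le

lemma bhattacharyya_sq_le {G : Set Ω} (hG : MeasurableSet G) :
    bhattacharyya P Q ^ 2 ≤ (P G + Q Gᶜ) * (P Set.univ + Q Set.univ) :=
  (lintegral_rpow_half_sq_le_lintegral_min_mul_lintegral_max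
    (measurable_rnDeriv P Q).aemeasurable).trans
    (mul_le_mul' (lintegral_min_rnDeriv_one_le hG) lintegral_max_rnDeriv_one_le)

lemma bhattacharyya_eq_lintegral_exp_neg_half_llr [SigmaFinite P] [SigmaFinite Q] (hPQ : P ≪ Q) :
    bhattacharyya P Q = ∫⁻ x, ENNReal.ofReal (exp (-llr P Q x / 2)) ∂P := by
  rw [← lintegral_rnDeriv_mul hPQ (by fun_prop), bhattacharyya]
  refine lintegral_congr_ae ?_
  filter_upwards [rnDeriv_lt_top P Q] with x hx
  exact (ENNReal.mul_ofReal_exp_neg_half_log_toReal hx.ne).symm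

lemma ofReal_exp_neg_half_integral_llr_le_bhattacharyya [IsProbabilityMeasure P] [SigmaFinite Q]
    (hPQ : P ≪ Q) (hllr : Integrable (llr P Q) P) :
    ENNReal.ofReal (exp (-(∫ x, llr P Q x ∂P) / 2)) ≤ bhattacharyya P Q := by
  rw [bhattacharyya_eq_lintegral_exp_neg_half_llr hPQ, ← integral_neg, ← integral_div]
  exact ofReal_exp_integral_le_lintegral (hllr.neg.div_const 2)

end MeasureTheory.Measure

lemma klDiv_le_ofReal_iff {Ω : Type*} [MeasurableSpace Ω] {P Q : Measure Ω} {k : ℝ} (hk : 0 ≤ k) :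
    klDiv P Q ≤ ENNReal.ofReal k ↔
      P ≪ Q ∧ Integrable (llr P Q) P ∧ ∫ x, llr P Q x ∂P ≤ k := by
  by_cases h : P ≪ Q ∧ Integrable (llr P Q) P
  · rw [klDiv, if_pos h, ENNReal.ofReal_le_ofReal_iff hk]
    tauto
  · rw [klDiv, if_neg h]
    simp only [top_le_iff, ENNReal.ofReal_ne_top, false_iff]
    tauto

open Measure in
/-- Bretagnolle–Huber inequality: for probability measures `P`, `Q` and any event `G`,
`P(G) + Q(Gᶜ) ≥ (1/2)·exp(−KL(P,Q))` (stated via any finite upper bound `k ≥ KL(P,Q)`,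
which is equivalent to the usual statement with the convention `exp(−∞) = 0`). -/
theorem bretagnolle_huber
    {Ω : Type*} [MeasurableSpace Ω] (P Q : Measure Ω)
    [IsProbabilityMeasure P] [IsProbabilityMeasure Q]
    (G : Set Ω) (hG : MeasurableSet G) :
    ∀ k : ℝ, 0 ≤ k → klDiv P Q ≤ ENNReal.ofReal k →
      (1 / 2 : ℝ) * Real.exp (-k) ≤ (P G).toReal + (Q Gᶜ).toReal := by
  intro k hk hkl
  obtain ⟨hPQ, hllr, hint⟩ := (klDiv_le_ofReal_iff hk).1 hkl
  have hB : ENNReal.ofReal (exp (-k / 2)) ≤ bhattacharyya P Q :=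
    (ENNReal.ofReal_le_ofReal (exp_le_exp.2 (by linarith))).trans
      (ofReal_exp_neg_half_integral_llr_le_bhattacharyya hPQ hllr)
  have hsum : ENNReal.ofReal (exp (-k)) ≤ (P G + Q Gᶜ) * 2 :=
    calc ENNReal.ofReal (exp (-k)) = ENNReal.ofReal (exp (-k / 2)) ^ 2 := by
          rw [← ENNReal.ofReal_pow (exp_pos _).le, ← exp_nat_mul]; ring_nf
      _ ≤ bhattacharyya P Q ^ 2 := by gcongr
      _ ≤ (P G + Q Gᶜ) * (P Set.univ + Q Set.univ) := bhattacharyya_sq_le hG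
      _ = (P G + Q Gᶜ) * 2 := by norm_num [one_add_one_eq_two]
  have hreal := ENNReal.toReal_mono (by finiteness) hsum
  rw [ENNReal.toReal_ofReal (exp_pos _).le, ENNReal.toReal_mul,
    ENNReal.toReal_add (by finiteness) (by finiteness), ENNReal.toReal_ofNat] at hreal
  linarith
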